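/- arXiv:2109.07767 — 5 statements merged into one kernel-verified Lean document; each statement's English description precedes it below -/
import Mathlib

section
/- Let P₁ > 0, P₂ > 0 and let X₁,…,Xₙ, Y₁,…,Yₙ be 2n mutually independent real random variables on a probability space (Ω, 𝒜, ℙ) with Xⱼ distributed as N(0,P₁) and Yⱼ distributed as N(0,P₂) for every j. Then for every δ > 0 with δ ≤ (16/5)·√(P₁·P₂), ℙ( Σ_{j=1}^{n} Xⱼ·Yⱼ ≥ n·δ ) ≤ exp( − n·δ² / (8·P₁·P₂) ). -/
/-!
Chernoff bound. For independent `X ~ N(0, v₁)` and `Y ~ N(0, v₂)`, integrating out `Y` gives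
`𝔼 exp (t X Y) = 𝔼 exp (v₂ t² X² / 2) = (1 - v₁ v₂ t²)^(-1/2)`, and `(1 - w)^(-1/2) ≤ exp (2 w)`
for `0 ≤ w ≤ 3/4`. Independence of the pairs `(Xⱼ, Yⱼ)` makes the mgf of `∑ Xⱼ Yⱼ` the `n`-th
power of that of one product, so the mgf is at most `exp (2 n P₁ P₂ t²)`, and `t = δ / (4 P₁ P₂)`
gives the bound. The condition `δ ≤ (16/5) √(P₁ P₂)` keeps `w = P₁ P₂ t² ≤ 16/25` below `3/4`.
-/

open MeasureTheory ProbabilityTheory Real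
open scoped NNReal

namespace ProbabilityTheory

section Gaussian

variable {v v₁ v₂ : ℝ≥0} {c t : ℝ}

lemma mgf_fun_sq_gaussianReal (h : 2 * v * c < 1) :
    mgf (fun x ↦ x ^ 2) (gaussianReal 0 v) c = (√(1 - 2 * v * c))⁻¹ := by
  rcases eq_or_ne v 0 with rfl | hv
  · simp [mgf]
  have hv' : (0 : ℝ) < v := by positivity
  have hb : 0 < 1 - 2 * v * c := by linarith
  have hdens : ∀ x : ℝ, gaussianPDFReal 0 v x • rexp (c * x ^ 2)
      = (√(2 * π * v))⁻¹ * rexp (-((1 - 2 * v * c) / (2 * v)) * x ^ 2) := by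
    intro x
    rw [gaussianPDFReal, smul_eq_mul, mul_assoc, ← Real.exp_add]
    congr 2
    field_simp
    ring
  rw [mgf, integral_gaussianReal_eq_integral_smul hv]
  simp_rw [hdens]
  rw [integral_const_mul, integral_gaussian, ← Real.sqrt_inv, ← Real.sqrt_mul (by positivity),
    ← Real.sqrt_inv]
  congr 1
  field_simp

lemma integrable_exp_mul_sq_gaussianReal (h : 2 * v * c < 1) :
    Integrable (fun x ↦ rexp (c * x ^ 2)) (gaussianReal 0 v) :=
  mgf_pos_iff.mp (by rw [mgf_fun_sq_gaussianReal h]; positivity)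

lemma mgf_mul_prod_gaussianReal (h : v₁ * v₂ * t ^ 2 < 1) :
    mgf (fun p : ℝ × ℝ ↦ p.1 * p.2) ((gaussianReal 0 v₁).prod (gaussianReal 0 v₂)) t
      = (√(1 - v₁ * v₂ * t ^ 2))⁻¹ := by
  have hc : 2 * v₁ * (v₂ * t ^ 2 / 2) < 1 := by linarith
  have hslice : ∀ x : ℝ, ∫ y, rexp (t * (x * y)) ∂(gaussianReal 0 v₂)
      = rexp (v₂ * t ^ 2 / 2 * x ^ 2) := by
    intro x
    simp_rw [← mul_assoc]
    rw [← mgf, mgf_fun_id_gaussianReal]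
    ring_nf
  have hint : Integrable (fun p : ℝ × ℝ ↦ rexp (t * (p.1 * p.2)))
      ((gaussianReal 0 v₁).prod (gaussianReal 0 v₂)) := by
    rw [integrable_prod_iff (by fun_prop)]
    refine ⟨ae_of_all _ fun x ↦ ?_, ?_⟩
    · simp_rw [← mul_assoc]
      exact integrable_exp_mul_gaussianReal _
    · simp_rw [Real.norm_eq_abs, abs_of_pos (Real.exp_pos _), hslice]
      exact integrable_exp_mul_sq_gaussianReal hc
  rw [mgf, integral_prod _ hint]
  simp_rw [hslice]
  rw [← mgf, mgf_fun_sq_gaussianReal hc]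
  ring_nf

lemma IndepFun.mgf_mul_of_gaussianReal {Ω : Type*} {mΩ : MeasurableSpace Ω} {μ : Measure Ω}
    [IsProbabilityMeasure μ] {X Y : Ω → ℝ} (hXY : IndepFun X Y μ)
    (hX : μ.map X = gaussianReal 0 v₁) (hY : μ.map Y = gaussianReal 0 v₂)
    (h : v₁ * v₂ * t ^ 2 < 1) :
    mgf (X * Y) μ t = (√(1 - v₁ * v₂ * t ^ 2))⁻¹ := by
  have hXm : AEMeasurable X μ := aemeasurable_of_map_neZero (by rw [hX]; infer_instance)
  have hYm : AEMeasurable Y μ := aemeasurable_of_map_neZero (by rw [hY]; infer_instance)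
  have hlaw := (indepFun_iff_map_prod_eq_prod_map_map hXm hYm).mp hXY
  rw [hX, hY] at hlaw
  rw [← mgf_mul_prod_gaussianReal h, ← hlaw, mgf_map (hXm.prodMk hYm) (by fun_prop)]
  rfl

end Gaussian

section Products

variable {Ω ι : Type*} {mΩ : MeasurableSpace Ω} {μ : Measure Ω} {X Y : ι → Ω → ℝ}

lemma iIndepFun.indepFun_finsetSum_mul_of_notMem (h : iIndepFun (Sum.elim X Y) μ)
    (hX : ∀ i, AEMeasurable (X i) μ) (hY : ∀ i, AEMeasurable (Y i) μ)
    {s : Finset ι} {i : ι} (hi : i ∉ s) :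
    IndepFun (∑ j ∈ s, X j * Y j) (X i * Y i) μ := by
  have hdisj : Disjoint (s.disjSum s) (({i} : Finset ι).disjSum {i}) := by
    simpa [Finset.disjoint_left] using hi
  have hblocks := h.indepFun_finset₀ _ _ hdisj (Sum.forall.mpr ⟨hX, hY⟩)
  let φ : ((k : s.disjSum s) → ℝ) → ℝ := fun z ↦
    ∑ j ∈ s.attach, z ⟨.inl j, by simp⟩ * z ⟨.inr j, by simp⟩
  let ψ : ((k : ({i} : Finset ι).disjSum {i}) → ℝ) → ℝ := fun z ↦
    z ⟨.inl i, by simp⟩ * z ⟨.inr i, by simp⟩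
  have := hblocks.comp (φ := φ) (ψ := ψ) (by fun_prop) (by fun_prop)
  convert this using 1
  · ext ω
    simp [φ, Finset.sum_attach s (fun j ↦ X j ω * Y j ω)]
  · rfl

lemma iIndepFun.mgf_finsetSum_mul (h : iIndepFun (Sum.elim X Y) μ)
    (hX : ∀ i, AEMeasurable (X i) μ) (hY : ∀ i, AEMeasurable (Y i) μ) (s : Finset ι) (t : ℝ) :
    mgf (∑ j ∈ s, X j * Y j) μ t = ∏ j ∈ s, mgf (X j * Y j) μ t := by
  have := h.isProbabilityMeasure
  classical
  induction s using Finset.induction_on with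
  | empty => simp
  | insert i s hi ih =>
    rw [Finset.sum_insert hi, Finset.prod_insert hi, add_comm,
      (h.indepFun_finsetSum_mul_of_notMem hX hY hi).mgf_add', ih, mul_comm]
    · exact (Finset.aemeasurable_sum _ fun j _ ↦ (hX j).mul (hY j)).aestronglyMeasurable
    · exact ((hX i).mul (hY i)).aestronglyMeasurable

lemma iIndepFun.mgf_finsetSum_mul_of_gaussianReal {v₁ v₂ : ℝ≥0} {t : ℝ}
    (h : iIndepFun (Sum.elim X Y) μ) (hX : ∀ i, μ.map (X i) = gaussianReal 0 v₁)
    (hY : ∀ i, μ.map (Y i) = gaussianReal 0 v₂) (ht : v₁ * v₂ * t ^ 2 < 1) (s : Finset ι) :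
    mgf (∑ j ∈ s, X j * Y j) μ t = (√(1 - v₁ * v₂ * t ^ 2))⁻¹ ^ s.card := by
  have := h.isProbabilityMeasure
  have hXm i : AEMeasurable (X i) μ := aemeasurable_of_map_neZero (by rw [hX i]; infer_instance)
  have hYm i : AEMeasurable (Y i) μ := aemeasurable_of_map_neZero (by rw [hY i]; infer_instance)
  rw [h.mgf_finsetSum_mul hXm hYm, ← Finset.prod_const]
  refine Finset.prod_congr rfl fun i _ ↦ ?_
  have hXY : IndepFun (X i) (Y i) μ := h.indepFun Sum.inl_ne_inr
  exact hXY.mgf_mul_of_gaussianReal (hX i) (hY i) ht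

end Products

end ProbabilityTheory

lemma Real.inv_sqrt_one_sub_le_exp_two_mul {w : ℝ} (h0 : 0 ≤ w) (h1 : w ≤ 3 / 4) :
    (√(1 - w))⁻¹ ≤ rexp (2 * w) := by
  have key : rexp (-(4 * w)) ≤ 1 - w :=
    calc rexp (-(4 * w)) = (rexp (4 * w))⁻¹ := Real.exp_neg _
      _ ≤ (1 + 4 * w)⁻¹ := inv_anti₀ (by linarith) (by linarith [Real.add_one_le_exp (4 * w)])
      _ ≤ 1 - w := by rw [inv_le_iff_one_le_mul₀ (by linarith)]; nlinarith
  have hpos : 0 < √(1 - w) := Real.sqrt_pos.mpr (by linarith)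
  rw [inv_le_comm₀ hpos (Real.exp_pos _), ← Real.exp_neg, Real.le_sqrt' (Real.exp_pos _),
    sq, ← Real.exp_add]
  convert key using 2
  ring

theorem subexp_tail_sum_products_of_gaussians_general
    {Ω : Type*} [MeasureSpace Ω] [IsProbabilityMeasure (ℙ : Measure Ω)]
    (P₁ P₂ : ℝ) (hP₁ : 0 < P₁) (hP₂ : 0 < P₂)
    (n : ℕ) (X Y : Fin n → Ω → ℝ)
    (hindep : iIndepFun (Sum.elim X Y) ℙ)
    (hXlaw : ∀ j, Measure.map (X j) ℙ = gaussianReal 0 P₁.toNNReal)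
    (hYlaw : ∀ j, Measure.map (Y j) ℙ = gaussianReal 0 P₂.toNNReal) :
    ∀ δ : ℝ, 0 < δ → δ ≤ (16 / 5) * Real.sqrt (P₁ * P₂) →
      (ℙ {ω | (n : ℝ) * δ ≤ ∑ j, X j ω * Y j ω}).toReal ≤
        Real.exp (-(n * δ ^ 2 / (8 * P₁ * P₂))) := by
  intro δ hδ hδle
  have hP : 0 < P₁ * P₂ := mul_pos hP₁ hP₂
  -- the Chernoff parameter minimising `-t δ + 2 P₁ P₂ t²`
  set t := δ / (4 * (P₁ * P₂)) with ht
  set w := P₁ * P₂ * t ^ 2 with hw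
  have hw34 : w ≤ 3 / 4 := by
    have hδsq := pow_le_pow_left₀ hδ.le hδle 2
    rw [mul_pow, Real.sq_sqrt hP.le] at hδsq
    rw [hw, ht, div_pow, mul_div_assoc', div_le_iff₀ (by positivity)]
    nlinarith
  have hcoe : (P₁.toNNReal : ℝ) * P₂.toNNReal * t ^ 2 = w := by
    rw [Real.coe_toNNReal _ hP₁.le, Real.coe_toNNReal _ hP₂.le]
  have hmgf : mgf (∑ j, X j * Y j) ℙ t = (√(1 - w))⁻¹ ^ n := by
    rw [hindep.mgf_finsetSum_mul_of_gaussianReal hXlaw hYlaw (by rw [hcoe]; linarith),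
      hcoe, Finset.card_fin]
  have hint : Integrable (fun ω ↦ rexp (t * (∑ j, X j * Y j) ω)) ℙ :=
    mgf_pos_iff.mp (by rw [hmgf]; exact pow_pos (inv_pos.mpr (Real.sqrt_pos.mpr (by linarith))) n)
  calc (ℙ {ω | (n : ℝ) * δ ≤ ∑ j, X j ω * Y j ω}).toReal
      = (ℙ : Measure Ω).real {ω | (n : ℝ) * δ ≤ (∑ j, X j * Y j) ω} := by
        simp only [Measure.real, Finset.sum_apply, Pi.mul_apply]
    _ ≤ rexp (-t * (n * δ)) * mgf (∑ j, X j * Y j) ℙ t :=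
        measure_ge_le_exp_mul_mgf _ (by positivity) hint
    _ ≤ rexp (-t * (n * δ)) * rexp (2 * w) ^ n := by
        rw [hmgf]
        gcongr
        exact Real.inv_sqrt_one_sub_le_exp_two_mul (by positivity) hw34
    _ = rexp (-(n * δ ^ 2 / (8 * P₁ * P₂))) := by
        rw [← Real.exp_nat_mul, ← Real.exp_add, hw, ht]
        congr 1
        field_simp
        ring

/-- Sub-exponential tail bound (52): for mutually independent `Xⱼ ~ N(0,P₁)`,
`Yⱼ ~ N(0,P₂)` and `0 < δ ≤ (16/5)√(P₁P₂)`,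
`ℙ(Σ XⱼYⱼ ≥ nδ) ≤ exp(-nδ²/(8P₁P₂))`. -/
theorem subexp_tail_sum_products_of_gaussians
    {Ω : Type*} [MeasureSpace Ω] [IsProbabilityMeasure (ℙ : Measure Ω)]
    (P₁ P₂ : ℝ) (hP₁ : 0 < P₁) (hP₂ : 0 < P₂)
    (n : ℕ) (X Y : Fin n → Ω → ℝ)
    (hXmeas : ∀ j, Measurable (X j)) (hYmeas : ∀ j, Measurable (Y j))
    (hindep : iIndepFun (Sum.elim X Y) ℙ)
    (hXlaw : ∀ j, Measure.map (X j) ℙ = gaussianReal 0 P₁.toNNReal)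
    (hYlaw : ∀ j, Measure.map (Y j) ℙ = gaussianReal 0 P₂.toNNReal) :
    ∀ δ : ℝ, 0 < δ → δ ≤ (16 / 5) * Real.sqrt (P₁ * P₂) →
      (ℙ {ω | (n : ℝ) * δ ≤ ∑ j, X j ω * Y j ω}).toReal ≤
        Real.exp (-(n * δ ^ 2 / (8 * P₁ * P₂))) :=
  subexp_tail_sum_products_of_gaussians_general P₁ P₂ hP₁ hP₂ n X Y hindep hXlaw hYlaw
end

section
/- Fix δ > 0 and nonnegative reals P_T, P₁₁, P₁₂, P₂ with P̄₁₁ := P₁₁ − δ ≥ 0, P̄₁₂ := P₁₂ − δ ≥ 0, P̄₂ := P₂ − δ ≥ 0. There exist constants c > 0 and C ≥ 0, depending only on δ, P_T, P₁₁, P₁₂, P₂, such that the following holds: for all integers n₁ ≥ n₂ ≥ 1 satisfying n₂·(P₁₁ + P₂) + (n₁ − n₂)·P₁₂ ≤ n₁·P_T, and for any mutually independent real random variables X_{1,1},…,X_{1,n₁}, X_{2,1},…,X_{2,n₂} on a probability space (Ω, 𝒜, ℙ) with X_{1,j} distributed as N(0, P̄₁₁) for 1 ≤ j ≤ n₂,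 X_{1,j} distributed as N(0, P̄₁₂) for n₂ < j ≤ n₁, and X_{2,j} distributed as N(0, P̄₂) for 1 ≤ j ≤ n₂, one has ℙ( Σ_{j=1}^{n₂} (X_{1,j}² + X_{2,j}²) + Σ_{j=n₂+1}^{n₁} X_{1,j}² > n₁·P_T ) ≤ C·exp(−c·n₂). -/
/-!
A Chernoff bound. The square of a centred Gaussian of variance `v` has moment generating
function `(1 - 2 t v)^{-1/2}`, and for `t` small compared with `δ / v²` this is at most
`exp (t (v + δ/2))`. The variances are the nominal powers backed off by `δ`, so by the budget
`∑ (vᵢ + δ/2)` over the `n₁ + n₂` symbols falls short of `n₁ P_T` by `δ (n₁ + n₂) / 2 ≥ δ n₂`.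
-/

open MeasureTheory ProbabilityTheory Real
open scoped NNReal

lemma lt_one_of_mul_add_le {x y : ℝ} (hy : 0 ≤ y) (h : x * (x + y) ≤ y) : x < 1 := by
  by_contra! hx
  nlinarith

lemma inv_sqrt_one_sub_le_exp {x y : ℝ} (hy : 0 ≤ y) (h : x * (x + y) ≤ y) :
    (√(1 - x))⁻¹ ≤ exp ((x + y) / 2) := by
  have hx1 : 0 < 1 - x := sub_pos.mpr (lt_one_of_mul_add_le hy h)
  have hinv : (1 - x)⁻¹ ≤ exp (x + y) :=
    calc (1 - x)⁻¹ ≤ x + y + 1 := by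
          -- `(x + y + 1) (1 - x) = 1 + y - x (x + y)`
          rw [inv_le_iff_one_le_mul₀ hx1]
          nlinarith
      _ ≤ exp (x + y) := add_one_le_exp _
  rw [← sqrt_inv, exp_half]
  exact sqrt_le_sqrt hinv

lemma mgf_sq_gaussianReal (v : ℝ≥0) {t : ℝ} (ht : 2 * t * v < 1) :
    mgf (fun x => x ^ 2) (gaussianReal 0 v) t = (√(1 - 2 * t * v))⁻¹ := by
  rcases eq_or_ne v 0 with rfl | hv
  · simp [mgf]
  have hv0 : (0 : ℝ) < v := by positivity
  have hdensity : ∀ x : ℝ, gaussianPDFReal 0 v x • rexp (t * x ^ 2) =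
      (√(2 * π * v))⁻¹ * rexp (-((1 - 2 * t * v) / (2 * v)) * x ^ 2) := by
    intro x
    rw [gaussianPDFReal, smul_eq_mul, mul_assoc, ← exp_add]
    congr 2
    field_simp
    ring
  rw [mgf, integral_gaussianReal_eq_integral_smul hv]
  simp_rw [hdensity]
  rw [integral_const_mul, integral_gaussian, div_div_eq_mul_div, sqrt_div' _ (by linarith),
    show π * (2 * v) = 2 * π * v by ring, mul_div_assoc', inv_mul_cancel₀ (by positivity),
    one_div]

lemma mgf_sq_of_map_eq_gaussianReal {Ω : Type*} [MeasurableSpace Ω] {μ : Measure Ω}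
    {X : Ω → ℝ} (hX : AEMeasurable X μ) {v : ℝ≥0} (hmap : μ.map X = gaussianReal 0 v) {t : ℝ}
    (ht : 2 * t * v < 1) :
    mgf (fun ω => X ω ^ 2) μ t = (√(1 - 2 * t * v))⁻¹ := by
  rw [← mgf_sq_gaussianReal v ht, ← hmap, mgf_map hX (by fun_prop)]
  rfl

section SumOfSquares

variable {ι Ω : Type*} [Fintype ι] [MeasurableSpace Ω] {μ : Measure Ω} {X : ι → Ω → ℝ}
  {v : ι → ℝ≥0}

lemma measureReal_sum_sq_ge_le_exp_mul_prod (hX : ∀ i, Measurable (X i))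
    (hindep : iIndepFun X μ) (hmap : ∀ i, μ.map (X i) = gaussianReal 0 (v i)) {t : ℝ}
    (ht : 0 ≤ t) (htv : ∀ i, 2 * t * v i < 1) (a : ℝ) :
    μ.real {ω | a ≤ ∑ i, X i ω ^ 2} ≤ exp (-t * a) * ∏ i, (√(1 - 2 * t * v i))⁻¹ := by
  have := hindep.isProbabilityMeasure
  set Z : ι → Ω → ℝ := fun i ω => X i ω ^ 2
  have hZ : ∀ i, Measurable (Z i) := fun i => (hX i).pow_const 2
  have hZindep : iIndepFun Z μ := hindep.comp _ fun _ => measurable_id.pow_const 2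
  have hmgf : ∀ i, mgf (Z i) μ t = (√(1 - 2 * t * v i))⁻¹ := fun i =>
    mgf_sq_of_map_eq_gaussianReal (hX i).aemeasurable (hmap i) (htv i)
  have hint : ∀ i, Integrable (fun ω => exp (t * Z i ω)) μ := fun i => by
    rw [← mgf_pos_iff, hmgf i]
    have := htv i
    positivity
  calc μ.real {ω | a ≤ ∑ i, X i ω ^ 2} = μ.real {ω | a ≤ (∑ i, Z i) ω} := by
        simp only [Finset.sum_apply, Z]
    _ ≤ exp (-t * a) * mgf (∑ i, Z i) μ t :=
        measure_ge_le_exp_mul_mgf a ht (hZindep.integrable_exp_mul_sum hZ fun i _ => hint i)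
    _ = exp (-t * a) * ∏ i, (√(1 - 2 * t * v i))⁻¹ := by
        rw [hZindep.mgf_sum hZ]
        simp_rw [hmgf]

lemma measureReal_sum_sq_ge_le_exp (hX : ∀ i, Measurable (X i))
    (hindep : iIndepFun X μ) (hmap : ∀ i, μ.map (X i) = gaussianReal 0 (v i)) {t ε : ℝ}
    (ht : 0 ≤ t) (hε : 0 ≤ ε) (htv : ∀ i, t * (2 * v i * (2 * v i + ε)) ≤ ε) (a : ℝ) :
    μ.real {ω | a ≤ ∑ i, X i ω ^ 2} ≤ exp (t * (∑ i, (v i + ε / 2) - a)) := by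
  have hx : ∀ i, 2 * t * v i * (2 * t * v i + t * ε) ≤ t * ε := fun i => by
    have := mul_le_mul_of_nonneg_left (htv i) ht
    linarith
  have hty : 0 ≤ t * ε := mul_nonneg ht hε
  calc μ.real {ω | a ≤ ∑ i, X i ω ^ 2}
      ≤ exp (-t * a) * ∏ i, (√(1 - 2 * t * v i))⁻¹ :=
        measureReal_sum_sq_ge_le_exp_mul_prod hX hindep hmap ht
          (fun i => lt_one_of_mul_add_le hty (hx i)) a
    _ ≤ exp (-t * a) * ∏ i, exp ((2 * t * v i + t * ε) / 2) := by
        gcongr with i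
        exact inv_sqrt_one_sub_le_exp hty (hx i)
    _ = exp (t * (∑ i, (v i + ε / 2) - a)) := by
        rw [← exp_sum, ← exp_add, mul_sub, Finset.mul_sum, neg_mul, neg_add_eq_sub]
        congr 2
        exact Finset.sum_congr rfl fun i _ => by ring

lemma measureReal_sum_sq_ge_le_exp_of_le (hX : ∀ i, Measurable (X i))
    (hindep : iIndepFun X μ) (hmap : ∀ i, μ.map (X i) = gaussianReal 0 (v i)) {ε V : ℝ}
    (hε : 0 ≤ ε) (hV : 0 ≤ V) (hvV : ∀ i, (v i : ℝ) ≤ V) (a : ℝ) :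
    μ.real {ω | a ≤ ∑ i, X i ω ^ 2} ≤
      exp (ε / (2 * V * (2 * V + ε) + 1) * (∑ i, (v i + ε / 2) - a)) := by
  have hD : 0 < 2 * V * (2 * V + ε) + 1 := by positivity
  refine measureReal_sum_sq_ge_le_exp hX hindep hmap (by positivity) hε (fun i => ?_) a
  calc ε / (2 * V * (2 * V + ε) + 1) * (2 * v i * (2 * v i + ε))
      ≤ ε / (2 * V * (2 * V + ε) + 1) * (2 * V * (2 * V + ε) + 1) := by
        have := hvV i
        gcongr
        nlinarith [(v i).coe_nonneg]
    _ = ε := div_mul_cancel₀ _ hD.ne'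

end SumOfSquares

lemma Fin.sum_univ_eq_sum_castLE_add_sum_filter {M : Type*} [AddCommMonoid M] {m n : ℕ}
    (h : m ≤ n) (f : Fin n → M) :
    ∑ j : Fin n, f j = ∑ j : Fin m, f (Fin.castLE h j) +
      ∑ j ∈ Finset.univ.filter (fun j : Fin n => m ≤ (j : ℕ)), f j := by
  have hmap : Finset.univ.map (Fin.castLEEmb h) =
      Finset.univ.filter (fun j : Fin n => ¬ m ≤ (j : ℕ)) := by
    ext j
    simpa using ⟨fun ⟨a, ha⟩ => ha ▸ a.isLt, fun hj => ⟨⟨j, hj⟩, rfl⟩⟩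
  rw [← Finset.sum_filter_not_add_sum_filter _ (fun j : Fin n => m ≤ (j : ℕ)), ← hmap,
    Finset.sum_map]
  rfl

lemma Fin.sum_ite_val_lt {M : Type*} [AddCommMonoid M] {m n : ℕ} (h : m ≤ n) (a b : M) :
    ∑ j : Fin n, (if (j : ℕ) < m then a else b) = m • a + (n - m) • b := by
  have hcard : (Finset.univ.filter (fun j : Fin n => m ≤ (j : ℕ))).card = n - m := by
    have := Fin.sum_univ_eq_sum_castLE_add_sum_filter h (fun _ => 1)
    simp only [Finset.sum_const, smul_eq_mul, mul_one, Finset.card_univ, Fintype.card_fin] at this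
    omega
  rw [Fin.sum_univ_eq_sum_castLE_add_sum_filter h,
    Finset.sum_ite_of_false fun j hj => not_lt.mpr (Finset.mem_filter.mp hj).2,
    Finset.sum_ite_of_true fun j _ => j.isLt]
  simp only [Finset.sum_const, Finset.card_univ, Fintype.card_fin, hcard]

lemma Fin.sum_castLE_add_add_sum_filter_eq_sum_elim {M : Type*} [AddCommMonoid M] {m n : ℕ}
    (h : m ≤ n) (f : Fin n → M) (g : Fin m → M) :
    ∑ j : Fin m, (f (Fin.castLE h j) + g j) +
      ∑ j ∈ Finset.univ.filter (fun j : Fin n => m ≤ (j : ℕ)), f j = ∑ i, Sum.elim f g i := by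
  rw [Fintype.sum_sum_type, Fin.sum_univ_eq_sum_castLE_add_sum_filter h, Finset.sum_add_distrib]
  simp only [Sum.elim_inl, Sum.elim_inr]
  abel

section PowerProfile

variable {α : Type*} {n₁ n₂ : ℕ}

def powerProfile (n₁ n₂ : ℕ) (a₁₁ a₁₂ a₂ : α) : Fin n₁ ⊕ Fin n₂ → α :=
  Sum.elim (fun j => if (j : ℕ) < n₂ then a₁₁ else a₁₂) fun _ => a₂

lemma powerProfile_mem {s : Set α} {a₁₁ a₁₂ a₂ : α} (h₁₁ : a₁₁ ∈ s) (h₁₂ : a₁₂ ∈ s)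
    (h₂ : a₂ ∈ s) (i : Fin n₁ ⊕ Fin n₂) : powerProfile n₁ n₂ a₁₁ a₁₂ a₂ i ∈ s := by
  rcases i with j | j
  · by_cases hj : (j : ℕ) < n₂ <;> simp [powerProfile, hj, h₁₁, h₁₂]
  · exact h₂

lemma sum_powerProfile [AddCommMonoid α] (h : n₂ ≤ n₁) (a₁₁ a₁₂ a₂ : α) :
    ∑ i, powerProfile n₁ n₂ a₁₁ a₁₂ a₂ i = n₂ • (a₁₁ + a₂) + (n₁ - n₂) • a₁₂ := by
  simp only [powerProfile, Fintype.sum_sum_type, Sum.elim_inl, Sum.elim_inr, Fin.sum_ite_val_lt h,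
    Finset.sum_const, Finset.card_univ, Fintype.card_fin, smul_add]
  abel

lemma map_sum_elim_eq_powerProfile {Ω β : Type*} [MeasurableSpace Ω] [MeasurableSpace β]
    {μ : Measure Ω} {X₁ : Fin n₁ → Ω → β} {X₂ : Fin n₂ → Ω → β} (ν : α → Measure β)
    {a₁₁ a₁₂ a₂ : α} (h₁₁ : ∀ j : Fin n₁, (j : ℕ) < n₂ → μ.map (X₁ j) = ν a₁₁)
    (h₁₂ : ∀ j : Fin n₁, n₂ ≤ (j : ℕ) → μ.map (X₁ j) = ν a₁₂)
    (h₂ : ∀ j : Fin n₂, μ.map (X₂ j) = ν a₂) (i : Fin n₁ ⊕ Fin n₂) :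
    μ.map (Sum.elim X₁ X₂ i) = ν (powerProfile n₁ n₂ a₁₁ a₁₂ a₂ i) := by
  rcases i with j | j
  · by_cases hj : (j : ℕ) < n₂
    · simpa [powerProfile, hj] using h₁₁ j hj
    · simpa [powerProfile, hj] using h₁₂ j (not_lt.mp hj)
  · exact h₂ j

end PowerProfile

theorem modified_sum_power_constraint_violation_exponential_bound_general
    (δ PT P₁₁ P₁₂ P₂ : ℝ) (hδ : 0 < δ)
    (hP₁₁ : 0 ≤ P₁₁ - δ) (hP₁₂ : 0 ≤ P₁₂ - δ) (hP₂ : 0 ≤ P₂ - δ) :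
    ∃ c C : ℝ, 0 < c ∧ 0 ≤ C ∧
      ∀ (n₁ n₂ : ℕ) (hn₂ : 1 ≤ n₂) (hn : n₂ ≤ n₁),
        (n₂ : ℝ) * (P₁₁ + P₂) + ((n₁ : ℝ) - n₂) * P₁₂ ≤ (n₁ : ℝ) * PT →
        ∀ (Ω : Type) (_ : MeasureSpace Ω) (_ : IsProbabilityMeasure (ℙ : Measure Ω))
          (X₁ : Fin n₁ → Ω → ℝ) (X₂ : Fin n₂ → Ω → ℝ),
          (∀ j, Measurable (X₁ j)) → (∀ j, Measurable (X₂ j)) →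
          iIndepFun (Sum.elim X₁ X₂) ℙ →
          (∀ j : Fin n₁, (j : ℕ) < n₂ →
            Measure.map (X₁ j) ℙ = gaussianReal 0 (P₁₁ - δ).toNNReal) →
          (∀ j : Fin n₁, n₂ ≤ (j : ℕ) →
            Measure.map (X₁ j) ℙ = gaussianReal 0 (P₁₂ - δ).toNNReal) →
          (∀ j : Fin n₂, Measure.map (X₂ j) ℙ = gaussianReal 0 (P₂ - δ).toNNReal) →
          (ℙ {ω | (n₁ : ℝ) * PT <
              (∑ j : Fin n₂, (X₁ (Fin.castLE hn j) ω ^ 2 + X₂ j ω ^ 2)) +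
              ∑ j ∈ Finset.univ.filter (fun j : Fin n₁ => n₂ ≤ (j : ℕ)),
                X₁ j ω ^ 2}).toReal ≤
            C * Real.exp (-c * n₂) := by
  set V := P₁₁ + P₁₂ + P₂
  set t := δ / (2 * V * (2 * V + δ) + 1)
  have hV : 0 ≤ V := by linarith
  refine ⟨t * δ, 1, by positivity, zero_le_one, ?_⟩
  intro n₁ n₂ _ hn hbudget Ω _ _ X₁ X₂ hX₁ hX₂ hindep h₁₁ h₁₂ h₂
  set p := powerProfile n₁ n₂ P₁₁ P₁₂ P₂
  have hp : ∀ i, p i ∈ Set.Icc δ V := powerProfile_mem ⟨by linarith, by linarith⟩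
    ⟨by linarith, by linarith⟩ ⟨by linarith, by linarith⟩
  have hvar : ∀ i, ((p i - δ).toNNReal : ℝ) = p i - δ := fun i =>
    Real.coe_toNNReal _ (sub_nonneg.mpr (hp i).1)
  have hsum : ∑ i, p i ≤ n₁ * PT := by
    rw [sum_powerProfile hn, nsmul_eq_mul, nsmul_eq_mul, Nat.cast_sub hn]
    linarith
  have hevent : ∀ ω, (n₁ : ℝ) * PT <
      (∑ j : Fin n₂, (X₁ (Fin.castLE hn j) ω ^ 2 + X₂ j ω ^ 2)) +
      ∑ j ∈ Finset.univ.filter (fun j : Fin n₁ => n₂ ≤ (j : ℕ)), X₁ j ω ^ 2 →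
      (n₁ : ℝ) * PT ≤ ∑ i, Sum.elim X₁ X₂ i ω ^ 2 := fun ω hω =>
    (hω.trans_eq <| (Fin.sum_castLE_add_add_sum_filter_eq_sum_elim hn (fun j => X₁ j ω ^ 2)
      (fun j => X₂ j ω ^ 2)).trans <| Fintype.sum_congr _ _ <| by rintro (j | j) <;> rfl).le
  calc _ ≤ (ℙ : Measure Ω).real {ω | (n₁ : ℝ) * PT ≤ ∑ i, Sum.elim X₁ X₂ i ω ^ 2} :=
        measureReal_mono hevent (measure_ne_top _ _)
    _ ≤ exp (t * (∑ i, (((p i - δ).toNNReal : ℝ) + δ / 2) - n₁ * PT)) :=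
        measureReal_sum_sq_ge_le_exp_of_le (Sum.forall.mpr ⟨hX₁, hX₂⟩) hindep
          (map_sum_elim_eq_powerProfile (fun P => gaussianReal 0 (P - δ).toNNReal) h₁₁ h₁₂ h₂)
          hδ.le hV (fun i => by linarith [hvar i, (hp i).2]) _
    _ ≤ 1 * exp (-(t * δ) * n₂) := by
        simp only [hvar, Finset.sum_add_distrib, Finset.sum_sub_distrib, Finset.sum_const,
          Finset.card_univ, Fintype.card_sum, Fintype.card_fin, nsmul_eq_mul, Nat.cast_add]
        rw [one_mul, exp_le_exp]
        have hexponent : ∑ i, p i - (n₁ + n₂) * δ + (n₁ + n₂) * (δ / 2) - n₁ * PT ≤ -δ * n₂ := by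
          linarith [mul_le_mul_of_nonneg_left (Nat.cast_le.mpr hn : (n₂ : ℝ) ≤ n₁) hδ.le]
        linarith [mul_le_mul_of_nonneg_left hexponent (by positivity : 0 ≤ t)]

/-- Lemma 1, second assertion (23): under the sum power budget
`n₂(P₁₁+P₂) + (n₁-n₂)P₁₂ ≤ n₁ P_T`, independent Gaussian codewords generated with
power backoff `δ` satisfy
`ℙ(Σ_{j≤n₂} (X₁ⱼ²+X₂ⱼ²) + Σ_{j>n₂} X₁ⱼ² > n₁ P_T) ≤ C exp(-c n₂)`. -/
theorem modified_sum_power_constraint_violation_exponential_bound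
    (δ PT P₁₁ P₁₂ P₂ : ℝ) (hδ : 0 < δ)
    (hPT : 0 ≤ PT) (hP₁₁ : 0 ≤ P₁₁ - δ) (hP₁₂ : 0 ≤ P₁₂ - δ) (hP₂ : 0 ≤ P₂ - δ) :
    ∃ c C : ℝ, 0 < c ∧ 0 ≤ C ∧
      ∀ (n₁ n₂ : ℕ) (hn₂ : 1 ≤ n₂) (hn : n₂ ≤ n₁),
        (n₂ : ℝ) * (P₁₁ + P₂) + ((n₁ : ℝ) - n₂) * P₁₂ ≤ (n₁ : ℝ) * PT →
        ∀ (Ω : Type) (_ : MeasureSpace Ω) (_ : IsProbabilityMeasure (ℙ : Measure Ω))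
          (X₁ : Fin n₁ → Ω → ℝ) (X₂ : Fin n₂ → Ω → ℝ),
          (∀ j, Measurable (X₁ j)) → (∀ j, Measurable (X₂ j)) →
          iIndepFun (Sum.elim X₁ X₂) ℙ →
          (∀ j : Fin n₁, (j : ℕ) < n₂ →
            Measure.map (X₁ j) ℙ = gaussianReal 0 (P₁₁ - δ).toNNReal) →
          (∀ j : Fin n₁, n₂ ≤ (j : ℕ) →
            Measure.map (X₁ j) ℙ = gaussianReal 0 (P₁₂ - δ).toNNReal) →
          (∀ j : Fin n₂, Measure.map (X₂ j) ℙ = gaussianReal 0 (P₂ - δ).toNNReal) →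
          (ℙ {ω | (n₁ : ℝ) * PT <
              (∑ j : Fin n₂, (X₁ (Fin.castLE hn j) ω ^ 2 + X₂ j ω ^ 2)) +
              ∑ j ∈ Finset.univ.filter (fun j : Fin n₁ => n₂ ≤ (j : ℕ)),
                X₁ j ω ^ 2}).toReal ≤
            C * Real.exp (-c * n₂) :=
  modified_sum_power_constraint_violation_exponential_bound_general δ PT P₁₁ P₁₂ P₂ hδ hP₁₁ hP₁₂ hP₂
end

section
/- Let g > 0, P > 0, let x ∈ ℝ, and let Z be a real random variable with the standard Gaussian distribution N(0,1) on a probability space (Ω, 𝒜, ℙ). Then E[ | √g·x·Z + (g·P/2)·(1 − Z²) |³ ] ≤ 4·g^{3/2}·( 8·g^{3/2}·P³ + 2·|x|³ ). -/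
/-!
Split the integrand with `|a + b|³ ≤ 4 (|a|³ + |b|³)`. For `Z ~ N(0, 1)` the two pieces are
controlled by even moments: `E|Z|³ ≤ E[(Z² + Z⁴) / 2] = 2` and `E|1 - Z²|³ ≤ E[(1 + Z²)³] = 28`.
The moments `E[Z^(2k)] = (2k - 1)‼` follow from the recursion `E[Z^(n+2)] = (n + 1) E[Z^n]`,
which is integration by parts against the Gaussian density `φ`, using `φ'(x) = -x φ(x)`.
-/

open MeasureTheory ProbabilityTheory Real
open scoped NNReal Nat

namespace MeasureTheory

lemma integral_abs_add_pow_le {α : Type*} [MeasurableSpace α] {μ : Measure α}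
    {f g : α → ℝ} (n : ℕ) (hf : Integrable (fun a => |f a| ^ n) μ)
    (hg : Integrable (fun a => |g a| ^ n) μ) :
    ∫ a, |f a + g a| ^ n ∂μ ≤ 2 ^ (n - 1) * (∫ a, |f a| ^ n ∂μ + ∫ a, |g a| ^ n ∂μ) := by
  rw [← integral_add hf hg, ← integral_const_mul]
  refine integral_mono_of_nonneg (ae_of_all _ fun _ => by positivity) ((hf.add hg).const_mul _)
    (ae_of_all _ fun a => ?_)
  exact (pow_le_pow_left₀ (abs_nonneg _) (abs_add_le _ _) n).trans
    (add_pow_le (abs_nonneg _) (abs_nonneg _) n)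

end MeasureTheory

namespace ProbabilityTheory

lemma hasDerivAt_gaussianPDFReal (μ : ℝ) (v : ℝ≥0) (x : ℝ) :
    HasDerivAt (gaussianPDFReal μ v) (-((x - μ) / v) * gaussianPDFReal μ v x) x := by
  have h : HasDerivAt (fun y => -(y - μ) ^ 2 / (2 * v)) (-(2 * (x - μ)) / (2 * v)) x := by
    simpa using (((hasDerivAt_id x).sub_const μ).pow 2).neg.div_const (2 * (v : ℝ))
  exact (h.exp.const_mul (√(2 * π * v))⁻¹).congr_deriv
    (by simp only [gaussianPDFReal_def]; ring)

lemma integrable_pow_gaussianReal (μ : ℝ) (v : ℝ≥0) (n : ℕ) :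
    Integrable (fun x => x ^ n) (gaussianReal μ v) :=
  (memLp_id_gaussianReal n).integrable_norm_pow'.mono' (by fun_prop)
    (ae_of_all _ fun x => by simp [norm_pow])

lemma integrable_abs_pow_gaussianReal (μ : ℝ) (v : ℝ≥0) (n : ℕ) :
    Integrable (fun x => |x| ^ n) (gaussianReal μ v) := by
  simpa using (memLp_id_gaussianReal (μ := μ) (v := v) n).integrable_norm_pow'

lemma integrable_gaussianPDFReal_mul {μ : ℝ} {v : ℝ≥0} (hv : v ≠ 0) {f : ℝ → ℝ}
    (hf : Integrable f (gaussianReal μ v)) :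
    Integrable fun x => gaussianPDFReal μ v x * f x := by
  rw [gaussianReal_of_var_ne_zero _ hv, integrable_withDensity_iff_integrable_smul'
    (measurable_gaussianPDF μ v) (ae_of_all _ fun _ => gaussianPDF_lt_top)] at hf
  simpa [toReal_gaussianPDF] using hf

lemma integral_pow_add_two_gaussianReal (v : ℝ≥0) (n : ℕ) :
    ∫ x, x ^ (n + 2) ∂gaussianReal 0 v = (n + 1) * v * ∫ x, x ^ n ∂gaussianReal 0 v := by
  rcases eq_or_ne v 0 with rfl | hv
  · simp [gaussianReal_zero_var]
  have hpdf := fun m => integrable_gaussianPDFReal_mul hv (integrable_pow_gaussianReal 0 v m)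
  have ibp := integral_mul_deriv_eq_deriv_mul_of_integrable
    (u := fun x => x ^ (n + 1)) (u' := fun x => (n + 1) * x ^ n) (v := gaussianPDFReal 0 v)
    (v' := fun x => -(x / v) * gaussianPDFReal 0 v x)
    (fun x _ => by simpa using hasDerivAt_pow (n + 1) x)
    (fun x _ => by simpa using hasDerivAt_gaussianPDFReal 0 v x)
    (((hpdf (n + 2)).const_mul (-(v : ℝ)⁻¹)).congr
      (ae_of_all _ fun x => by simp only [Pi.mul_apply]; ring))
    (((hpdf n).const_mul (n + 1)).congr (ae_of_all _ fun x => by simp only [Pi.mul_apply]; ring))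
    ((hpdf (n + 1)).congr (ae_of_all _ fun x => by simp only [Pi.mul_apply]; ring))
  simp only [integral_gaussianReal_eq_integral_smul hv, smul_eq_mul]
  have hv' : (v : ℝ) ≠ 0 := NNReal.coe_ne_zero.mpr hv
  have hL : ∫ x, x ^ (n + 1) * (-(x / v) * gaussianPDFReal 0 v x)
      = -(v : ℝ)⁻¹ * ∫ x, gaussianPDFReal 0 v x * x ^ (n + 2) := by
    rw [← integral_const_mul]; congr 1 with x; ring
  have hR : ∫ x, (n + 1) * x ^ n * gaussianPDFReal 0 v x
      = (n + 1) * ∫ x, gaussianPDFReal 0 v x * x ^ n := by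
    rw [← integral_const_mul]; congr 1 with x; ring
  rw [hL, hR] at ibp
  field_simp at ibp
  linear_combination -ibp

lemma integral_pow_two_mul_gaussianReal (v : ℝ≥0) (k : ℕ) :
    ∫ x, x ^ (2 * k) ∂gaussianReal 0 v = v ^ k * (2 * k - 1)‼ := by
  induction k with
  | zero => simp
  | succ k ih =>
    rw [show 2 * (k + 1) = 2 * k + 2 by ring, integral_pow_add_two_gaussianReal, ih]
    rcases k with _ | k
    · simp
    · rw [show 2 * (k + 1) + 2 - 1 = 2 * k + 1 + 2 by omega,
        show 2 * (k + 1) - 1 = 2 * k + 1 by omega, Nat.doubleFactorial_add_two]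
      push_cast
      ring

lemma integral_sq_gaussianReal_zero (v : ℝ≥0) : ∫ x, x ^ 2 ∂gaussianReal 0 v = v := by
  simpa using integral_pow_two_mul_gaussianReal v 1

lemma integral_pow_four_gaussianReal_zero (v : ℝ≥0) :
    ∫ x, x ^ 4 ∂gaussianReal 0 v = 3 * v ^ 2 := by
  simpa [Nat.doubleFactorial, mul_comm] using integral_pow_two_mul_gaussianReal v 2

lemma integral_pow_six_gaussianReal_zero (v : ℝ≥0) :
    ∫ x, x ^ 6 ∂gaussianReal 0 v = 15 * v ^ 3 := by
  simpa [Nat.doubleFactorial, mul_comm] using integral_pow_two_mul_gaussianReal v 3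

lemma integral_abs_pow_three_gaussianReal_le : ∫ x, |x| ^ 3 ∂gaussianReal 0 1 ≤ 2 := by
  have hle (x : ℝ) : |x| ^ 3 ≤ (x ^ 2 + x ^ 4) / 2 := by
    have h4 : x ^ 4 = (|x| ^ 2) ^ 2 := by rw [sq_abs]; ring
    rw [h4, ← sq_abs x]
    nlinarith [sq_nonneg (|x| ^ 2 - |x|)]
  have h2 := integrable_pow_gaussianReal 0 1 2
  have h4 := integrable_pow_gaussianReal 0 1 4
  calc ∫ x, |x| ^ 3 ∂gaussianReal 0 1 ≤ ∫ x, (x ^ 2 + x ^ 4) / 2 ∂gaussianReal 0 1 :=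
        integral_mono_of_nonneg (ae_of_all _ fun _ => by positivity) ((h2.add h4).div_const 2)
          (ae_of_all _ hle)
    _ = 2 := by
        rw [integral_div, integral_add h2 h4, integral_sq_gaussianReal_zero,
          integral_pow_four_gaussianReal_zero]
        norm_num

lemma integrable_one_add_sq_pow_three_gaussianReal (μ : ℝ) (v : ℝ≥0) :
    Integrable (fun x => (1 + x ^ 2) ^ 3) (gaussianReal μ v) := by
  have h := integrable_pow_gaussianReal μ v
  refine ((((integrable_const 1).add ((h 2).const_mul 3)).add ((h 4).const_mul 3)).add (h 6)).congr
    (ae_of_all _ fun x => ?_)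
  simp only [Pi.add_apply]
  ring

lemma integral_one_add_sq_pow_three_gaussianReal (v : ℝ≥0) :
    ∫ x, (1 + x ^ 2) ^ 3 ∂gaussianReal 0 v
      = 1 + 3 * (v : ℝ) + 9 * (v : ℝ) ^ 2 + 15 * (v : ℝ) ^ 3 := by
  have h := integrable_pow_gaussianReal 0 v
  have h024 : Integrable (fun x => 1 + 3 * x ^ 2 + 3 * x ^ 4) (gaussianReal 0 v) :=
    ((integrable_const 1).add ((h 2).const_mul 3)).add ((h 4).const_mul 3)
  calc ∫ x, (1 + x ^ 2) ^ 3 ∂gaussianReal 0 v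
      = ∫ x, 1 + 3 * x ^ 2 + 3 * x ^ 4 + x ^ 6 ∂gaussianReal 0 v := by congr with x; ring
    _ = _ := by
        rw [integral_add h024 (h 6), integral_add _ ((h 4).const_mul 3),
          integral_add (integrable_const 1) ((h 2).const_mul 3), integral_const_mul,
          integral_const_mul, integral_sq_gaussianReal_zero, integral_pow_four_gaussianReal_zero,
          integral_pow_six_gaussianReal_zero]
        · simp only [integral_const, probReal_univ, smul_eq_mul]
          ring
        · exact (integrable_const 1).add ((h 2).const_mul 3)

lemma abs_one_sub_sq_pow_three_le (x : ℝ) : |1 - x ^ 2| ^ 3 ≤ (1 + x ^ 2) ^ 3 :=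
  pow_le_pow_left₀ (abs_nonneg _) ((abs_sub 1 (x ^ 2)).trans_eq (by rw [abs_one, abs_sq])) 3

lemma integrable_abs_one_sub_sq_pow_three_gaussianReal (μ : ℝ) (v : ℝ≥0) :
    Integrable (fun x => |1 - x ^ 2| ^ 3) (gaussianReal μ v) :=
  (integrable_one_add_sq_pow_three_gaussianReal μ v).mono' (by fun_prop)
    (ae_of_all _ fun x => by simpa using abs_one_sub_sq_pow_three_le x)

lemma integral_abs_one_sub_sq_pow_three_gaussianReal_le :
    ∫ x, |1 - x ^ 2| ^ 3 ∂gaussianReal 0 1 ≤ 28 := by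
  calc ∫ x, |1 - x ^ 2| ^ 3 ∂gaussianReal 0 1 ≤ ∫ x, (1 + x ^ 2) ^ 3 ∂gaussianReal 0 1 :=
        integral_mono_of_nonneg (ae_of_all _ fun _ => by positivity)
          (integrable_one_add_sq_pow_three_gaussianReal 0 1)
          (ae_of_all _ abs_one_sub_sq_pow_three_le)
    _ = 28 := by
        rw [integral_one_add_sq_pow_three_gaussianReal]
        norm_num

end ProbabilityTheory

theorem third_absolute_moment_centralized_information_density_general
    {Ω : Type*} [MeasureSpace Ω]
    (g P x : ℝ) (hg : 0 < g) (hP : 0 < P)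
    (Z : Ω → ℝ) (hZmeas : Measurable Z)
    (hZlaw : Measure.map Z ℙ = gaussianReal 0 1) :
    ∫ ω, |Real.sqrt g * x * Z ω + g * P / 2 * (1 - Z ω ^ 2)| ^ 3 ∂ℙ ≤
      4 * g ^ ((3 : ℝ) / 2) * (8 * g ^ ((3 : ℝ) / 2) * P ^ 3 + 2 * |x| ^ 3) := by
  have hsqrt : √g ^ 3 = g ^ ((3 : ℝ) / 2) := by
    rw [sqrt_eq_rpow, ← rpow_natCast, ← rpow_mul hg.le]; norm_num
  have hcube : g ^ ((3 : ℝ) / 2) * g ^ ((3 : ℝ) / 2) = g ^ 3 := by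
    rw [← rpow_add hg, ← rpow_natCast]; norm_num
  rw [← integral_map (f := fun t => |√g * x * t + g * P / 2 * (1 - t ^ 2)| ^ 3)
    hZmeas.aemeasurable (by fun_prop), hZlaw]
  have ha := (integrable_abs_pow_gaussianReal 0 1 3).const_mul (|√g * x| ^ 3)
  have hb := (integrable_abs_one_sub_sq_pow_three_gaussianReal 0 1).const_mul (|g * P / 2| ^ 3)
  simp only [← mul_pow, ← abs_mul] at ha hb
  calc _ ≤ 2 ^ (3 - 1) * (∫ t, |√g * x * t| ^ 3 ∂gaussianReal 0 1
          + ∫ t, |g * P / 2 * (1 - t ^ 2)| ^ 3 ∂gaussianReal 0 1) :=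
        integral_abs_add_pow_le 3 ha hb
    _ = 4 * (√g ^ 3 * |x| ^ 3 * ∫ t, |t| ^ 3 ∂gaussianReal 0 1
          + (g * P / 2) ^ 3 * ∫ t, |1 - t ^ 2| ^ 3 ∂gaussianReal 0 1) := by
        simp only [abs_mul, abs_div, abs_two, abs_of_pos hg, abs_of_pos hP,
          abs_of_nonneg (sqrt_nonneg g), mul_pow, integral_const_mul]
        norm_num
    _ ≤ 4 * (√g ^ 3 * |x| ^ 3 * 2 + (g * P / 2) ^ 3 * 28) := by
        gcongr
        · exact integral_abs_pow_three_gaussianReal_le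
        · exact integral_abs_one_sub_sq_pow_three_gaussianReal_le
    _ ≤ _ := by
        have hgP : 0 ≤ g ^ 3 * P ^ 3 := by positivity
        rw [hsqrt]
        linear_combination 18 * hgP - 32 * P ^ 3 * hcube

/-- Absolute centralized third-moment bound (66) of Appendix I:
`E[|√g·x·Z + (gP/2)(1 - Z²)|³] ≤ 4 g^{3/2} (8 g^{3/2} P³ + 2|x|³)`. -/
theorem third_absolute_moment_centralized_information_density
    {Ω : Type*} [MeasureSpace Ω] [IsProbabilityMeasure (ℙ : Measure Ω)]
    (g P x : ℝ) (hg : 0 < g) (hP : 0 < P)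
    (Z : Ω → ℝ) (hZmeas : Measurable Z)
    (hZlaw : Measure.map Z ℙ = gaussianReal 0 1) :
    ∫ ω, |Real.sqrt g * x * Z ω + g * P / 2 * (1 - Z ω ^ 2)| ^ 3 ∂ℙ ≤
      4 * g ^ ((3 : ℝ) / 2) * (8 * g ^ ((3 : ℝ) / 2) * P ^ 3 + 2 * |x| ^ 3) :=
  third_absolute_moment_centralized_information_density_general g P x hg hP Z hZmeas hZlaw
end

section
/- Let g > 0, P > 0, let n₁ ≥ n₂ > 0 be reals, let L ≥ 0, and let s be a real number with 0 ≤ s ≤ n₁·P. Write C := (1/2)·log₂(1 + gP) and suppose the positivity condition n₂·( C − (log₂ e)·gP/(2(1+gP)) ) ≥ L holds (the factor in parentheses being positive). Then ( n₂·C + (log₂ e)·g·(s − n₂·P)/(2(1+gP)) − L ) / ( (log₂ e/(2(1+gP)))·√(4·g·s + 2·n₂·g²·P²) ) ≥ ( (2(1+gP)·C − (log₂ e)·gP)·n₂ − 2(1+gP)·L ) / ( (log₂ e)·√(4·g·P + 2·g²·P²)·√n₁ ). -/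
/-!
Write `ℓ = log₂ e`, `A = 1 + gP` and `E = (2AC - ℓgP)n₂ - 2AL`, which is `≥ 0` by the
positivity condition. Multiplying numerator and denominator of `r_m(n₂)` by `2A` gives
`r_m(n₂) = (E + ℓgs) / (ℓ √(4gs + 2n₂g²P²))`. Drop `ℓgs ≥ 0` from the numerator; by
`s ≤ n₁P` and `n₂ ≤ n₁` the denominator is at most `ℓ √(4gP + 2g²P²) √n₁`.
-/

open Real

lemma logb_two_exp_one_pos : 0 < logb 2 (exp 1) :=
  logb_pos one_lt_two (one_lt_exp_iff.mpr one_pos)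

lemma sqrt_energy_le_sqrt_mul_sqrt {g P n₁ n₂ s : ℝ} (hg : 0 ≤ g) (hn₂ : 0 ≤ n₂)
    (hn : n₂ ≤ n₁) (hs : s ≤ n₁ * P) :
    √(4 * g * s + 2 * n₂ * g ^ 2 * P ^ 2) ≤ √(4 * g * P + 2 * g ^ 2 * P ^ 2) * √n₁ := by
  rw [← sqrt_mul' _ (hn₂.trans hn)]
  gcongr √?_
  nlinarith [mul_le_mul_of_nonneg_left hs hg, mul_le_mul_of_nonneg_left hn (sq_nonneg (g * P))]

theorem r_m_uniform_lower_bound_general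
    (g P n₁ n₂ L s C : ℝ)
    (hg : 0 < g) (hP : 0 < P) (hn₂ : 0 < n₂) (hn : n₂ ≤ n₁)
    (hs0 : 0 ≤ s) (hs : s ≤ n₁ * P)
    (hpos : n₂ * (C - Real.logb 2 (Real.exp 1) * g * P / (2 * (1 + g * P))) ≥ L) :
    (n₂ * C + Real.logb 2 (Real.exp 1) * g * (s - n₂ * P) / (2 * (1 + g * P)) - L) /
        ((Real.logb 2 (Real.exp 1) / (2 * (1 + g * P))) *
          Real.sqrt (4 * g * s + 2 * n₂ * g ^ 2 * P ^ 2)) ≥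
      ((2 * (1 + g * P) * C - Real.logb 2 (Real.exp 1) * g * P) * n₂ -
          2 * (1 + g * P) * L) /
        (Real.logb 2 (Real.exp 1) * Real.sqrt (4 * g * P + 2 * g ^ 2 * P ^ 2) *
          Real.sqrt n₁) := by
  set ℓ := logb 2 (exp 1)
  set A := 1 + g * P
  set u := √(4 * g * s + 2 * n₂ * g ^ 2 * P ^ 2)
  set E := (2 * A * C - ℓ * g * P) * n₂ - 2 * A * L
  have hℓ : 0 < ℓ := logb_two_exp_one_pos
  have hA : 0 < A := by positivity
  have hu : 0 < u := sqrt_pos.mpr (by positivity)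
  have hE : 0 ≤ E := by
    have h := mul_le_mul_of_nonneg_left hpos (by positivity : (0 : ℝ) ≤ 2 * A)
    have h2A : 2 * A ≠ 0 := by positivity
    calc (0 : ℝ) ≤ 2 * A * (n₂ * (C - ℓ * g * P / (2 * A))) - 2 * A * L := by linarith
      _ = E := by field_simp; ring
  have hr : (n₂ * C + ℓ * g * (s - n₂ * P) / (2 * A) - L) / (ℓ / (2 * A) * u)
      = (E + ℓ * g * s) / (ℓ * u) := by
    field_simp; ring
  rw [hr, ge_iff_le, mul_assoc]
  have hden : ℓ * u ≤ ℓ * (√(4 * g * P + 2 * g ^ 2 * P ^ 2) * √n₁) :=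
    mul_le_mul_of_nonneg_left (sqrt_energy_le_sqrt_mul_sqrt hg.le hn₂.le hn hs) hℓ.le
  exact div_le_div₀ (by positivity) (le_add_of_nonneg_right (by positivity)) (by positivity) hden

/-- The chain (76)–(81) of Appendix I: a uniform lower bound on `r_m(n₂)` over all
codewords whose truncated energy satisfies `0 ≤ s ≤ n₁ P`. -/
theorem r_m_uniform_lower_bound
    (g P n₁ n₂ L s C : ℝ)
    (hg : 0 < g) (hP : 0 < P) (hn₂ : 0 < n₂) (hn : n₂ ≤ n₁) (hL : 0 ≤ L)
    (hs0 : 0 ≤ s) (hs : s ≤ n₁ * P)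
    (hC : C = (1 / 2) * Real.logb 2 (1 + g * P))
    (hpos : n₂ * (C - Real.logb 2 (Real.exp 1) * g * P / (2 * (1 + g * P))) ≥ L) :
    (n₂ * C + Real.logb 2 (Real.exp 1) * g * (s - n₂ * P) / (2 * (1 + g * P)) - L) /
        ((Real.logb 2 (Real.exp 1) / (2 * (1 + g * P))) *
          Real.sqrt (4 * g * s + 2 * n₂ * g ^ 2 * P ^ 2)) ≥
      ((2 * (1 + g * P) * C - Real.logb 2 (Real.exp 1) * g * P) * n₂ -
          2 * (1 + g * P) * L) /
        (Real.logb 2 (Real.exp 1) * Real.sqrt (4 * g * P + 2 * g ^ 2 * P ^ 2) *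
          Real.sqrt n₁) :=
  r_m_uniform_lower_bound_general g P n₁ n₂ L s C hg hP hn₂ hn hs0 hs hpos
end

section
/- Let h > 0, P₁ > 0, P₂ ≥ 0, and let X and Z̃ be independent real random variables on a probability space (Ω, 𝒜, ℙ) with X distributed as N(0, P₁) and Z̃ distributed as N(0, 1 + h·P₂). Then Var[ (log₂ e / (2(1 + h(P₁+P₂)))) · ( h·( X² − (P₁/(1+hP₂))·Z̃² ) + 2·√h·X·Z̃ ) ] = (log₂ e)² · h·P₁ / (1 + h·(P₁ + P₂)). -/
/-!
The moments of a centred Gaussian `X` of variance `v` are the derivatives at `0` of its moment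
generating function `t ↦ exp (v t² / 2)`, so `E X = E X³ = 0`, `E X² = v` and `E X⁴ = 3 v²`.
For independent centred Gaussians `X`, `Z` of variances `v`, `w` the mixed moments factorise, and
expanding the square gives `Var (α X² + β Z² + γ X Z) = 2 α² v² + 2 β² w² + γ² v w`.
The information density is such a form with `α = c h`, `β = -c h P₁ / w`, `γ = 2 c √h`, where
`w = 1 + h P₂` and `c = log₂ e / (2 (1 + h (P₁ + P₂)))`; its variance is
`4 c² h P₁ (h P₁ + w) = (log₂ e)² h P₁ / (1 + h (P₁ + P₂))`.
-/

open MeasureTheory ProbabilityTheory Real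

lemma iteratedDeriv_exp_mul_sq_div_two_zero (v : ℝ) :
    iteratedDeriv 1 (fun t => rexp (v * t ^ 2 / 2)) 0 = 0 ∧
    iteratedDeriv 2 (fun t => rexp (v * t ^ 2 / 2)) 0 = v ∧
    iteratedDeriv 3 (fun t => rexp (v * t ^ 2 / 2)) 0 = 0 ∧
    iteratedDeriv 4 (fun t => rexp (v * t ^ 2 / 2)) 0 = 3 * v ^ 2 := by
  set g : ℝ → ℝ := fun t => rexp (v * t ^ 2 / 2)
  have deriv_mul_g : ∀ p q : ℝ → ℝ, (∀ t, HasDerivAt p (q t) t) →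
      deriv (fun t => p t * g t) = fun t => (q t + v * t * p t) * g t := by
    intro p q hp
    funext t
    have hg : HasDerivAt g (g t * (v * (2 * t) / 2)) t := by
      simpa using (((hasDerivAt_pow 2 t).const_mul v).div_const 2).exp
    rw [((hp t).fun_mul hg).deriv]
    ring
  have d1 : iteratedDeriv 1 g = fun t => v * t * g t := by
    rw [iteratedDeriv_one]
    simpa using deriv_mul_g (fun _ => 1) (fun _ => 0) (fun t => hasDerivAt_const t 1)
  have d2 : iteratedDeriv 2 g = fun t => (v + v ^ 2 * t ^ 2) * g t := by
    rw [iteratedDeriv_succ, d1, deriv_mul_g _ (fun _ => v)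
      (fun t => by simpa using (hasDerivAt_id t).const_mul v)]
    funext t; ring
  have d3 : iteratedDeriv 3 g = fun t => (3 * v ^ 2 * t + v ^ 3 * t ^ 3) * g t := by
    rw [iteratedDeriv_succ, d2, deriv_mul_g _ (fun t => 2 * v ^ 2 * t) (fun t =>
      (((hasDerivAt_pow 2 t).const_mul (v ^ 2)).const_add v).congr_deriv (by ring))]
    funext t; ring
  have d4 : iteratedDeriv 4 g =
      fun t => (3 * v ^ 2 + 6 * v ^ 3 * t ^ 2 + v ^ 4 * t ^ 4) * g t := by
    rw [iteratedDeriv_succ, d3, deriv_mul_g (fun t => 3 * v ^ 2 * t + v ^ 3 * t ^ 3)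
      (fun t => 3 * v ^ 2 + 3 * v ^ 3 * t ^ 2) (fun t =>
        (((hasDerivAt_id t).const_mul (3 * v ^ 2)).fun_add
          ((hasDerivAt_pow 3 t).const_mul (v ^ 3))).congr_deriv (by simp; ring))]
    funext t; ring
  simp [d1, d2, d3, d4, g]

section

variable {Ω : Type*} [MeasurableSpace Ω] {μ : Measure Ω} [IsProbabilityMeasure μ]
  {X Z : Ω → ℝ} {v w : NNReal}

lemma integrableExpSet_eq_univ_of_map_eq_gaussianReal {m : ℝ}
    (hX : μ.map X = gaussianReal m v) : integrableExpSet X μ = Set.univ :=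
  Set.eq_univ_of_forall fun _ => mgf_pos_iff.mp <| by rw [mgf_gaussianReal hX]; exact exp_pos _

lemma integrable_pow_of_map_eq_gaussianReal {m : ℝ} (hX : μ.map X = gaussianReal m v) (n : ℕ) :
    Integrable (fun ω => X ω ^ n) μ :=
  integrable_pow_of_mem_interior_integrableExpSet
    (by simp [integrableExpSet_eq_univ_of_map_eq_gaussianReal hX]) n

lemma integral_pow_of_map_eq_gaussianReal (hX : μ.map X = gaussianReal 0 v) (n : ℕ) :
    ∫ ω, X ω ^ n ∂μ = iteratedDeriv n (fun t => rexp (v * t ^ 2 / 2)) 0 := by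
  have hmgf : mgf X μ = fun t => rexp (v * t ^ 2 / 2) := by
    funext t; simp [mgf_gaussianReal hX]
  rw [← hmgf, iteratedDeriv_mgf_zero
    (by simp [integrableExpSet_eq_univ_of_map_eq_gaussianReal hX])]
  rfl

lemma moments_of_map_eq_gaussianReal (hX : μ.map X = gaussianReal 0 v) :
    ∫ ω, X ω ^ 1 ∂μ = 0 ∧ ∫ ω, X ω ^ 2 ∂μ = v ∧ ∫ ω, X ω ^ 3 ∂μ = 0 ∧
      ∫ ω, X ω ^ 4 ∂μ = 3 * (v : ℝ) ^ 2 := by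
  simpa only [integral_pow_of_map_eq_gaussianReal hX] using
    iteratedDeriv_exp_mul_sq_div_two_zero (v : ℝ)

theorem variance_quadratic_of_indepFun_gaussianReal (hX : μ.map X = gaussianReal 0 v)
    (hZ : μ.map Z = gaussianReal 0 w) (hXZ : IndepFun X Z μ) (α β γ : ℝ) :
    Var[fun ω => α * X ω ^ 2 + β * Z ω ^ 2 + γ * (X ω * Z ω); μ] =
      2 * α ^ 2 * v ^ 2 + 2 * β ^ 2 * w ^ 2 + γ ^ 2 * v * w := by
  have hXn := integrable_pow_of_map_eq_gaussianReal hX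
  have hZn := integrable_pow_of_map_eq_gaussianReal hZ
  have hind : ∀ i j : ℕ, IndepFun (fun ω => X ω ^ i) (fun ω => Z ω ^ j) μ :=
    fun i j => hXZ.comp (measurable_id.pow_const i) (measurable_id.pow_const j)
  have hXZn : ∀ i j : ℕ, Integrable (fun ω => X ω ^ i * Z ω ^ j) μ :=
    fun i j => (hind i j).integrable_mul (hXn i) (hZn j)
  have hprod : ∀ i j : ℕ, ∫ ω, X ω ^ i * Z ω ^ j ∂μ = (∫ ω, X ω ^ i ∂μ) * ∫ ω, Z ω ^ j ∂μ :=
    fun i j => (hind i j).integral_fun_mul_eq_mul_integral (hXn i).1 (hZn j).1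
  obtain ⟨mX1, mX2, mX3, mX4⟩ := moments_of_map_eq_gaussianReal hX
  obtain ⟨mZ1, mZ2, mZ3, mZ4⟩ := moments_of_map_eq_gaussianReal hZ
  -- Every term is a constant times `X ^ i * Z ^ j` or `X ^ n` (no bare `X`), so that `fun_prop`
  -- finds its integrability among `hXn`, `hZn`, `hXZn` and `hprod` rewrites it.
  set W : Ω → ℝ := fun ω => α * X ω ^ 2 + β * Z ω ^ 2 + γ * (X ω ^ 1 * Z ω ^ 1) with hW
  have hW2 : (fun ω => W ω ^ 2) = fun ω => α ^ 2 * X ω ^ 4 + β ^ 2 * Z ω ^ 4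
      + (γ ^ 2 + 2 * α * β) * (X ω ^ 2 * Z ω ^ 2) + 2 * α * γ * (X ω ^ 3 * Z ω ^ 1)
      + 2 * β * γ * (X ω ^ 1 * Z ω ^ 3) := by
    funext ω; ring
  have hW_memLp : MemLp W 2 μ :=
    (memLp_two_iff_integrable_sq (by fun_prop : Integrable W μ).1).2 (by rw [hW2]; fun_prop)
  have hEW : μ[W] = α * v + β * w := by
    simp (disch := fun_prop) only [hW, integral_add, integral_const_mul, hprod, mX1, mX2, mZ1, mZ2]
    ring
  have hEW2 : μ[W ^ 2] = 3 * α ^ 2 * v ^ 2 + 3 * β ^ 2 * w ^ 2 + (γ ^ 2 + 2 * α * β) * v * w := by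
    simp (disch := fun_prop) only [Pi.pow_apply, hW2, integral_add, integral_const_mul, hprod,
      mX1, mX2, mX3, mX4, mZ1, mZ2, mZ3, mZ4]
    ring
  have hW_eq : (fun ω => α * X ω ^ 2 + β * Z ω ^ 2 + γ * (X ω * Z ω)) = W := by
    funext ω; simp [hW]
  rw [hW_eq, variance_eq_sub hW_memLp, hEW, hEW2]
  ring

end

theorem variance_weaker_user_information_density_general
    {Ω : Type*} [MeasureSpace Ω] [IsProbabilityMeasure (ℙ : Measure Ω)]
    (h P₁ P₂ : ℝ) (hh : 0 < h) (hP₁ : 0 < P₁) (hP₂ : 0 ≤ P₂)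
    (X Z : Ω → ℝ)
    (hXZ : IndepFun X Z ℙ)
    (hXlaw : Measure.map X ℙ = gaussianReal 0 P₁.toNNReal)
    (hZlaw : Measure.map Z ℙ = gaussianReal 0 (1 + h * P₂).toNNReal) :
    variance (fun ω => (Real.logb 2 (Real.exp 1) / (2 * (1 + h * (P₁ + P₂)))) *
        (h * (X ω ^ 2 - P₁ / (1 + h * P₂) * Z ω ^ 2) +
          2 * Real.sqrt h * X ω * Z ω)) ℙ =
      Real.logb 2 (Real.exp 1) ^ 2 * h * P₁ / (1 + h * (P₁ + P₂)) := by
  set c := Real.logb 2 (Real.exp 1) / (2 * (1 + h * (P₁ + P₂)))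
  have hw : 0 < 1 + h * P₂ := by positivity
  have hquadratic : (fun ω => c * (h * (X ω ^ 2 - P₁ / (1 + h * P₂) * Z ω ^ 2) +
      2 * Real.sqrt h * X ω * Z ω)) = fun ω => c * h * X ω ^ 2
        + -(c * h * (P₁ / (1 + h * P₂))) * Z ω ^ 2 + 2 * c * Real.sqrt h * (X ω * Z ω) := by
    funext ω; ring
  rw [hquadratic, variance_quadratic_of_indepFun_gaussianReal hXlaw hZlaw hXZ,
    Real.coe_toNNReal _ hP₁.le, Real.coe_toNNReal _ hw.le]
  simp only [c, mul_pow, neg_sq, sq_sqrt hh.le]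
  field_simp
  ring

/-- Equations (93)–(95) of Appendix II: variance of the weaker user's centralized
per-symbol information density in the superposed block. -/
theorem variance_weaker_user_information_density
    {Ω : Type*} [MeasureSpace Ω] [IsProbabilityMeasure (ℙ : Measure Ω)]
    (h P₁ P₂ : ℝ) (hh : 0 < h) (hP₁ : 0 < P₁) (hP₂ : 0 ≤ P₂)
    (X Z : Ω → ℝ) (hXmeas : Measurable X) (hZmeas : Measurable Z)
    (hXZ : IndepFun X Z ℙ)
    (hXlaw : Measure.map X ℙ = gaussianReal 0 P₁.toNNReal)
    (hZlaw : Measure.map Z ℙ = gaussianReal 0 (1 + h * P₂).toNNReal) :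
    variance (fun ω => (Real.logb 2 (Real.exp 1) / (2 * (1 + h * (P₁ + P₂)))) *
        (h * (X ω ^ 2 - P₁ / (1 + h * P₂) * Z ω ^ 2) +
          2 * Real.sqrt h * X ω * Z ω)) ℙ =
      Real.logb 2 (Real.exp 1) ^ 2 * h * P₁ / (1 + h * (P₁ + P₂)) :=
  variance_weaker_user_information_density_general h P₁ P₂ hh hP₁ hP₂ X Z hXZ hXlaw hZlaw
end
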